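/- arXiv:1808.01074 — 8 statements merged into one kernel-verified Lean document; each statement's English description precedes it below -/
import Mathlib

section
/- Let G be a finite simple graph on a finite vertex set V such that for every proper subset S ⊊ V, the distinguishing number of the induced subgraph of G on S is not equal to the distinguishing number of G (i.e., G is distinguishing critical). Then the automorphism group of G acts transitively on V: for any two vertices v, w of G there is a graph automorphism of G sending v to w. -/
/-- The distinguishing number of a simple graph `G`: the least number `r` of labels
such that some labeling `φ : V → Fin r` is preserved only by automorphisms of `G`
that fix every vertex. -/
noncomputable def distinguishingNumber {V : Type*} (G : SimpleGraph V) : ℕ :=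
  sInf {r : ℕ | ∃ φ : V → Fin r,
    ∀ e : G ≃g G, (∀ v, φ (e v) = φ v) → ∀ v, e v = v}

/-!
Deleting a vertex lowers the distinguishing number by at most one, so the distinguishing numbers
of the induced subgraphs of `G[S]` take every value up to `D(G[S])`; for a critical `G` this
forces `D(G[S]) < D(G)` for every proper `S ⊂ V`.

If the orbit `O` of `v` misses `w`, colour `O` by a distinguishing labelling of `G - w` and `Oᶜ`
by one of `G[Oᶜ]`. An automorphism preserving these colours preserves `O`, so it fixes `Oᶜ`
pointwise; in particular it fixes `w`, hence preserves `V - w` and fixes it pointwise too.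
Thus `D(G) ≤ max (D(G[Oᶜ])) (D(G - w)) < D(G)`.
-/

open Function

section Distinguishing

variable {V W α : Type*}

def IsDistinguishing (G : SimpleGraph V) (φ : V → α) : Prop :=
  ∀ e : G ≃g G, (∀ v, φ (e v) = φ v) → ∀ v, e v = v

namespace IsDistinguishing

variable {G : SimpleGraph V} {H : SimpleGraph W} {φ : V → α}

lemma of_injective (hφ : Injective φ) : IsDistinguishing G φ :=
  fun _ he v => hφ (he v)

lemma comp_left {β : Type*} (hφ : IsDistinguishing G φ) {f : α → β} (hf : Injective f) :
    IsDistinguishing G (f ∘ φ) :=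
  fun e he => hφ e fun v => hf (he v)

lemma comp_iso_symm (hφ : IsDistinguishing G φ) (f : G ≃g H) :
    IsDistinguishing H (φ ∘ f.symm) := by
  intro e he w
  have hfix := hφ ((f.trans e).trans f.symm) (fun v => by simpa using he (f v)) (f.symm w)
  simpa using congrArg f hfix

lemma apply_eq_of_induce {S : Set V} {φ : S → α} (hφ : IsDistinguishing (G.induce S) φ)
    (e : G ≃g G) (hS : ∀ x, e x ∈ S ↔ x ∈ S)
    (he : ∀ x (hx : x ∈ S), φ ⟨e x, (hS x).2 hx⟩ = φ ⟨x, hx⟩) {x : V} (hx : x ∈ S) :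
    e x = x :=
  congrArg Subtype.val
    (hφ (SimpleGraph.Iso.induce e (e.toEquiv.bijOn hS)) (fun y => he y y.2) ⟨x, hx⟩)

end IsDistinguishing

section DistinguishingNumber

variable {G : SimpleGraph V} {H : SimpleGraph W} {r : ℕ}

lemma distinguishingNumber_le {φ : V → Fin r} (hφ : IsDistinguishing G φ) :
    distinguishingNumber G ≤ r :=
  Nat.sInf_le ⟨φ, hφ⟩

lemma distinguishingNumber_of_isEmpty [IsEmpty V] : distinguishingNumber G = 0 :=
  Nat.le_zero.mp (distinguishingNumber_le (IsDistinguishing.of_injective (φ := isEmptyElim)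
    isEmptyElim))

variable [Finite V]

lemma exists_isDistinguishing_fin :
    ∃ φ : V → Fin (distinguishingNumber G), IsDistinguishing G φ := by
  have := Fintype.ofFinite V
  exact Nat.sInf_mem (s := {r | ∃ φ : V → Fin r, IsDistinguishing G φ})
    ⟨_, Fintype.equivFin V, IsDistinguishing.of_injective (Equiv.injective _)⟩

lemma exists_isDistinguishing_of_distinguishingNumber_le (h : distinguishingNumber G ≤ r) :
    ∃ φ : V → Fin r, IsDistinguishing G φ :=
  have ⟨φ, hφ⟩ := exists_isDistinguishing_fin (G := G)
  ⟨Fin.castLE h ∘ φ, hφ.comp_left (Fin.castLE_injective h)⟩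

lemma SimpleGraph.Iso.distinguishingNumber_eq [Finite W] (f : G ≃g H) :
    distinguishingNumber G = distinguishingNumber H := by
  obtain ⟨φ, hφ⟩ := exists_isDistinguishing_fin (G := G)
  obtain ⟨ψ, hψ⟩ := exists_isDistinguishing_fin (G := H)
  exact le_antisymm (by simpa using distinguishingNumber_le (hψ.comp_iso_symm f.symm))
    (distinguishingNumber_le (hφ.comp_iso_symm f))

lemma distinguishingNumber_le_induce_add_one {S : Set V} {u : V} (hSu : ∀ x, x ∈ S ↔ x ≠ u) :
    distinguishingNumber G ≤ distinguishingNumber (G.induce S) + 1 := by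
  classical
  obtain ⟨φ, hφ⟩ := exists_isDistinguishing_fin (G := G.induce S)
  let ψ : V → Fin (distinguishingNumber (G.induce S) + 1) := fun x =>
    if h : x ∈ S then (φ ⟨x, h⟩).castSucc else Fin.last _
  have hψS : ∀ x, x ∈ S ↔ ψ x ≠ Fin.last _ := fun x => by
    by_cases h : x ∈ S <;> simp [ψ, h, Fin.castSucc_ne_last]
  refine distinguishingNumber_le (φ := ψ) fun e he x => ?_
  have hS : ∀ x, e x ∈ S ↔ x ∈ S := fun x => by rw [hψS, hψS, he]
  by_cases hx : x ∈ S
  · refine hφ.apply_eq_of_induce e hS (fun y hy => ?_) hx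
    simpa [ψ, hy, (hS y).2 hy] using he y
  · have hex : e x ∉ S := (hS x).not.2 hx
    rw [hSu, not_not] at hx hex
    exact hex.trans hx.symm

end DistinguishingNumber

section Critical

variable {G : SimpleGraph V} [Finite V] {r : ℕ}

lemma distinguishingNumber_induce_insert_le {s : Set V} {a : V} (ha : a ∉ s) :
    distinguishingNumber (G.induce (insert a s)) ≤ distinguishingNumber (G.induce s) + 1 := by
  let f := G.induceHomOfLE (Set.subset_insert a s)
  rw [f.isoInduceRange.distinguishingNumber_eq]
  refine distinguishingNumber_le_induce_add_one (u := ⟨a, Set.mem_insert a s⟩) fun x => ?_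
  obtain ⟨x, rfl | hx⟩ := x
  · simpa [f, Subtype.ext_iff] using ha
  · simpa [f, Subtype.ext_iff, hx] using ne_of_mem_of_not_mem hx ha

lemma exists_subset_distinguishingNumber_induce_eq (S : Set V) {t : ℕ}
    (ht : t ≤ distinguishingNumber (G.induce S)) :
    ∃ T ⊆ S, distinguishingNumber (G.induce T) = t := by
  induction S, S.toFinite using Set.Finite.induction_on with
  | empty =>
    rw [distinguishingNumber_of_isEmpty, Nat.le_zero] at ht
    exact ⟨∅, subset_rfl, ht ▸ distinguishingNumber_of_isEmpty⟩
  | @insert a s ha _ ih =>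
    obtain h | h := ht.eq_or_lt
    · exact ⟨_, subset_rfl, h.symm⟩
    · have := distinguishingNumber_induce_insert_le (G := G) ha
      obtain ⟨T, hTs, hT⟩ := ih (by omega)
      exact ⟨T, hTs.trans (Set.subset_insert a s), hT⟩

def IsDistinguishingCritical (G : SimpleGraph V) : Prop :=
  ∀ S : Set V, S ⊂ Set.univ → distinguishingNumber (G.induce S) ≠ distinguishingNumber G

lemma IsDistinguishingCritical.distinguishingNumber_induce_lt (hG : IsDistinguishingCritical G)
    {S : Set V} (hS : S ⊂ Set.univ) :
    distinguishingNumber (G.induce S) < distinguishingNumber G := by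
  by_contra! h
  obtain ⟨T, hTS, hT⟩ := exists_subset_distinguishingNumber_induce_eq S h
  exact hG T (hTS.trans_ssubset hS) hT

lemma distinguishingNumber_le_of_invariant {S T : Set V}
    (hS : ∀ (e : G ≃g G) x, e x ∈ S ↔ x ∈ S) (hST : S ⊆ T)
    (hSc : distinguishingNumber (G.induce Sᶜ) ≤ r) (hT : distinguishingNumber (G.induce T) ≤ r) :
    distinguishingNumber G ≤ r := by
  classical
  obtain ⟨φ, hφ⟩ := exists_isDistinguishing_of_distinguishingNumber_le hSc
  obtain ⟨χ, hχ⟩ := exists_isDistinguishing_of_distinguishingNumber_le hT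
  let ψ : V → Fin r := fun x => if h : x ∈ S then χ ⟨x, hST h⟩ else φ ⟨x, h⟩
  refine distinguishingNumber_le (φ := ψ) fun e he => ?_
  have hScompl : ∀ x, e x ∈ Sᶜ ↔ x ∈ Sᶜ := fun x => (hS e x).not
  have hfixSc : ∀ x ∉ S, e x = x := fun x hx =>
    hφ.apply_eq_of_induce e hScompl
      (fun y (hy : y ∉ S) => by simpa [ψ, hy, (hS e y).not.2 hy] using he y) hx
  have hT' : ∀ x, e x ∈ T ↔ x ∈ T := fun x => by
    by_cases hx : x ∈ S
    · exact iff_of_true (hST ((hS e x).2 hx)) (hST hx)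
    · rw [hfixSc x hx]
  have hfixT : ∀ x ∈ T, e x = x := fun x hx => by
    refine hχ.apply_eq_of_induce e hT' (fun y hy => ?_) hx
    by_cases hyS : y ∈ S
    · simpa [ψ, hyS, (hS e y).2 hyS] using he y
    · exact congrArg χ (Subtype.ext (hfixSc y hyS))
  intro x
  by_cases hx : x ∈ S
  · exact hfixT x (hST hx)
  · exact hfixSc x hx

lemma IsDistinguishingCritical.isPretransitive (hG : IsDistinguishingCritical G) :
    MulAction.IsPretransitive (G ≃g G) V := by
  refine ⟨fun v w => ?_⟩
  by_contra! hvw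
  let O := MulAction.orbit (G ≃g G) v
  have hO : ∀ (e : G ≃g G) x, e x ∈ O ↔ x ∈ O := fun e x => by
    change e • x ∈ O ↔ x ∈ O
    rw [← MulAction.orbit_eq_iff, MulAction.orbit_smul, MulAction.orbit_eq_iff]
  have hwO : w ∉ O := fun ⟨e, he⟩ => hvw e he
  have hOc : Oᶜ ⊂ Set.univ :=
    Set.ssubset_univ_iff.2 fun h => (h ▸ Set.mem_univ v) (MulAction.mem_orbit_self v)
  have hw : ({w}ᶜ : Set V) ⊂ Set.univ :=
    Set.ssubset_univ_iff.2 fun h => (h ▸ Set.mem_univ w) rfl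
  have hlt := max_lt (hG.distinguishingNumber_induce_lt hOc) (hG.distinguishingNumber_induce_lt hw)
  exact hlt.not_ge (distinguishingNumber_le_of_invariant hO
    (Set.subset_compl_singleton_iff.2 hwO) (le_max_left _ _) (le_max_right _ _))

end Critical

end Distinguishing

/-- If a finite simple graph is distinguishing critical (every proper induced subgraph has a
different distinguishing number), then its automorphism group acts transitively on vertices. -/
theorem distinguishing_critical_transitive {V : Type*} [Fintype V] (G : SimpleGraph V)
    (hcrit : ∀ S : Set V, S ⊂ Set.univ →
      distinguishingNumber (G.induce S) ≠ distinguishingNumber G) :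
    ∀ v w : V, ∃ e : G ≃g G, e v = w :=
  have := IsDistinguishingCritical.isPretransitive hcrit
  MulAction.exists_smul_eq (G ≃g G)
end

section
/- Let G be a finite simple graph, let v be a vertex of G, and let H be the induced subgraph of G obtained by deleting the vertex v. Then D(H) ≥ D(G) − 1; equivalently, D(G) ≤ D(H) + 1. -/
/-- Deleting a single vertex from a finite simple graph decreases the distinguishing
number by at most one: `D(G) ≤ D(G - v) + 1`. -/
theorem distinguishingNumber_delete_vertex {V : Type*} [Fintype V] (G : SimpleGraph V) (v : V) :
    distinguishingNumber G ≤ distinguishingNumber (G.induce ({v}ᶜ : Set V)) + 1 := by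
  classical
  set H := G.induce ({v}ᶜ : Set V) with hH
  have hne : {r : ℕ | ∃ φ : ({v}ᶜ : Set V) → Fin r,
      ∀ e : H ≃g H, (∀ x, φ (e x) = φ x) → ∀ x, e x = x}.Nonempty := by
    refine ⟨Fintype.card ({v}ᶜ : Set V), Fintype.equivFin _, ?_⟩
    intro e he x
    exact (Fintype.equivFin _).injective (he x)
  obtain ⟨φ, hφ⟩ : ∃ φ : ({v}ᶜ : Set V) → Fin (distinguishingNumber H),
      ∀ e : H ≃g H, (∀ x, φ (e x) = φ x) → ∀ x, e x = x := Nat.sInf_mem hne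
  apply Nat.sInf_le
  refine ⟨fun x => if h : x = v then Fin.last (distinguishingNumber H) else (φ ⟨x, h⟩).castSucc, ?_⟩
  intro e he
  have hev : e v = v := by
    by_contra hne'
    have h1 := he v
    simp only [dif_pos rfl, dif_neg hne'] at h1
    exact (Fin.castSucc_lt_last _).ne h1
  have hmap : ∀ x : ({v}ᶜ : Set V), e x ∈ ({v}ᶜ : Set V) := by
    intro x h
    have hx : (x : V) = v := e.injective ((Set.mem_singleton_iff.mp h).trans hev.symm)
    exact x.2 (Set.mem_singleton_iff.mpr hx)
  have hmap' : ∀ x : ({v}ᶜ : Set V), e.symm x ∈ ({v}ᶜ : Set V) := by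
    intro x h
    have hx : (x : V) = v := by
      have := congrArg e (Set.mem_singleton_iff.mp h)
      rwa [e.apply_symm_apply, hev] at this
    exact x.2 (Set.mem_singleton_iff.mpr hx)
  let e' : H ≃g H :=
    { toFun := fun x => ⟨e x, hmap x⟩
      invFun := fun x => ⟨e.symm x, hmap' x⟩
      left_inv := fun x => Subtype.ext (e.symm_apply_apply x)
      right_inv := fun x => Subtype.ext (e.apply_symm_apply x)
      map_rel_iff' := by
        intro a b
        simp only [hH, SimpleGraph.comap_adj, Function.Embedding.coe_subtype,
          Equiv.coe_fn_mk]
        exact e.map_rel_iff }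
  have key : ∀ x, e' x = x := by
    apply hφ
    intro x
    have h2 := he x.val
    have hxv : (x : V) ≠ v := fun h => x.2 (Set.mem_singleton_iff.mpr h)
    have hexv : e x.val ≠ v := hmap x
    simp only [dif_neg hexv, dif_neg hxv] at h2
    have h3 := Fin.castSucc_injective _ h2
    simpa [e'] using h3
  intro w
  by_cases hw : w = v
  · rw [hw, hev]
  · have := key ⟨w, hw⟩
    exact Subtype.ext_iff.mp this
end

section
/- Fix n ≥ 3 and let X be the set with n+2 elements {x₁,…,x_n, x_{n+1}, x_{n+2}}, identified with (Fin n) ⊕ (Fin 2). Let the symmetric group S_n act on X as follows: a permutation σ of {1,…,n} acts on {x₁,…,x_n} in the natural way, fixes x_{n+1} and x_{n+2} if σ is even, and interchanges x_{n+1} and x_{n+2} if σ is odd. Then the distinguishing number of this action is exactly n−1: there exists a distinguishing labeling of X using n−1 labels, and there is no distinguishing labeling of X using n−2 labels. -/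
/-- The action of `S_n` on a set with `n + 2` elements: it permutes the first `n` elements
naturally, and interchanges the last two elements exactly when the permutation is odd. -/
def snAction (n : ℕ) (σ : Equiv.Perm (Fin n)) : Fin n ⊕ Fin 2 → Fin n ⊕ Fin 2
  | Sum.inl i => Sum.inl (σ i)
  | Sum.inr j => if Equiv.Perm.sign σ = 1 then Sum.inr j else Sum.inr (j + 1)

lemma swap_fiber {n : ℕ} {α : Type*} (ψ : Fin n → α) {x y : Fin n} (h : ψ x = ψ y)
    (i : Fin n) : ψ (Equiv.swap x y i) = ψ i := by
  rcases eq_or_ne i x with rfl | hx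
  · rw [Equiv.swap_apply_left, h]
  rcases eq_or_ne i y with rfl | hy
  · rw [Equiv.swap_apply_right, h]
  · rw [Equiv.swap_apply_of_ne_of_ne hx hy]

/-- For `n ≥ 3`, the above action of `S_n` on an `(n+2)`-element set has distinguishing
number exactly `n - 1`: there is a distinguishing labeling with `n - 1` labels but none
with `n - 2` labels. -/
theorem snAction_distinguishing_number (n : ℕ) (hn : 3 ≤ n) :
    (∃ φ : Fin n ⊕ Fin 2 → Fin (n - 1),
      ∀ σ : Equiv.Perm (Fin n), (∀ x, φ (snAction n σ x) = φ x) → σ = 1) ∧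
    ¬ (∃ φ : Fin n ⊕ Fin 2 → Fin (n - 2),
      ∀ σ : Equiv.Perm (Fin n), (∀ x, φ (snAction n σ x) = φ x) → σ = 1) := by
  constructor
  · -- upper bound: a distinguishing labeling with n-1 labels
    refine ⟨Sum.elim (fun i => ⟨min i.val (n - 2), by have := i.isLt; omega⟩)
      (fun j => ⟨j.val, by have := j.isLt; omega⟩), ?_⟩
    intro σ h
    have key : ∀ i : Fin n, min (σ i).val (n - 2) = min i.val (n - 2) := by
      intro i
      have := h (Sum.inl i)
      simpa [snAction, Fin.ext_iff] using this
    have hfix : ∀ i : Fin n, i.val < n - 2 → σ i = i := by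
      intro i hi
      have := key i
      exact Fin.ext (by omega)
    by_contra hσ
    set a : Fin n := ⟨n - 2, by omega⟩ with ha_def
    set b : Fin n := ⟨n - 1, by omega⟩ with hb_def
    have hab : a ≠ b := by simp [ha_def, hb_def, Fin.ext_iff]; omega
    have hrange : ∀ i : Fin n, ¬ i.val < n - 2 → i = a ∨ i = b := by
      intro i hi
      have := i.isLt
      rcases Nat.lt_or_ge i.val (n - 1) with h1 | h1
      · left; apply Fin.ext; show i.val = n - 2; omega
      · right; apply Fin.ext; show i.val = n - 1; omega
    have hσa : σ a = a ∨ σ a = b := by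
      apply hrange
      intro hlt
      have := hfix (σ a) hlt
      have := σ.injective this
      rw [this] at hlt
      simp [ha_def] at hlt
    have hσb : σ b = a ∨ σ b = b := by
      apply hrange
      intro hlt
      have := hfix (σ b) hlt
      have := σ.injective this
      rw [this] at hlt
      simp [hb_def] at hlt; omega
    rcases hσa with hσa | hσa
    · have hσb' : σ b = b := by
        rcases hσb with hσb | hσb
        · exact absurd (σ.injective (hσa.trans hσb.symm)) hab
        · exact hσb
      apply hσ
      ext i
      by_cases hi : i.val < n - 2
      · simp [hfix i hi]
      · rcases hrange i hi with rfl | rfl <;> simp [hσa, hσb']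
    · have hσb' : σ b = a := by
        rcases hσb with hσb | hσb
        · exact hσb
        · exact absurd (σ.injective (hσa.trans hσb.symm)) hab
      have hswap : σ = Equiv.swap a b := by
        ext i
        by_cases hi : i.val < n - 2
        · rw [hfix i hi, Equiv.swap_apply_of_ne_of_ne]
          · intro hia; rw [hia] at hi; simp [ha_def] at hi
          · intro hib; rw [hib] at hi; simp [hb_def] at hi; omega
        · rcases hrange i hi with rfl | rfl <;> simp [hσa, hσb']
      have hsign : Equiv.Perm.sign σ = -1 := by
        rw [hswap, Equiv.Perm.sign_swap hab]
      have h0 := h (Sum.inr 0)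
      rw [show snAction n σ (Sum.inr 0) = Sum.inr 1 from by
        simp [snAction, hsign]] at h0
      simp [Fin.ext_iff] at h0
  · -- lower bound: no distinguishing labeling with n-2 labels
    rintro ⟨φ, hφ⟩
    classical
    set ψ : Fin n → Fin (n - 2) := fun i => φ (Sum.inl i) with hψ_def
    have main : ∀ σ : Equiv.Perm (Fin n), Equiv.Perm.sign σ = 1 →
        (∀ i, ψ (σ i) = ψ i) → σ = 1 := by
      intro σ hs hi
      apply hφ
      intro x
      match x with
      | Sum.inl i => simpa [snAction, hψ_def] using hi i
      | Sum.inr j => simp [snAction, hs]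
    set F : Fin (n - 2) → Finset (Fin n) :=
      fun k => Finset.univ.filter (fun i => ψ i = k) with hF_def
    have hsum : ∑ k, (F k).card = n := by
      have := Finset.card_eq_sum_card_fiberwise
        (f := ψ) (s := Finset.univ) (t := Finset.univ) (fun x _ => Finset.mem_univ _)
      simpa [hF_def] using this.symm
    by_cases hA : ∃ k, 3 ≤ (F k).card
    · obtain ⟨k, hk⟩ := hA
      obtain ⟨a, b, c, ha, hb, hc, hab, hac, hbc⟩ := (Finset.two_lt_card_iff (s := F k)).mp (by omega)
      rw [hF_def, Finset.mem_filter] at ha hb hc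
      have hψab : ψ a = ψ b := ha.2.trans hb.2.symm
      have hψbc : ψ b = ψ c := hb.2.trans hc.2.symm
      set σ : Equiv.Perm (Fin n) := Equiv.swap a b * Equiv.swap b c with hσ_def
      have hsign : Equiv.Perm.sign σ = 1 := by
        rw [hσ_def, map_mul, Equiv.Perm.sign_swap hab, Equiv.Perm.sign_swap hbc]
        decide
      have hinv : ∀ i, ψ (σ i) = ψ i := by
        intro i
        rw [hσ_def, Equiv.Perm.mul_apply, swap_fiber ψ hψab, swap_fiber ψ hψbc]
      have h1 := main σ hsign hinv
      have hσa : σ a = b := by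
        rw [hσ_def, Equiv.Perm.mul_apply, Equiv.swap_apply_of_ne_of_ne hab hac,
          Equiv.swap_apply_left]
      rw [h1] at hσa
      exact hab (by simpa using hσa)
    · push_neg at hA
      set T : Finset (Fin (n - 2)) :=
        Finset.univ.filter (fun k => 2 ≤ (F k).card) with hT_def
      have hT : 2 ≤ T.card := by
        by_contra hTc
        push_neg at hTc
        have hb : ∀ k : Fin (n - 2), (F k).card ≤ 1 + (if k ∈ T then 1 else 0) := by
          intro k
          by_cases h2 : 2 ≤ (F k).card
          · have := hA k
            simp [hT_def, h2]
            omega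
          · split <;> omega
        have hle := Finset.sum_le_sum (fun k (_ : k ∈ Finset.univ) => hb k)
        rw [hsum, Finset.sum_add_distrib, Finset.sum_const, Finset.sum_boole] at hle
        simp [hT_def] at hle
        have hcard : (Finset.univ : Finset (Fin (n - 2))).card = n - 2 := by simp
        rw [hT_def] at hTc
        omega
      obtain ⟨k, hkT, l, hlT, hkl⟩ := Finset.one_lt_card.mp hT
      rw [hT_def, Finset.mem_filter] at hkT hlT
      obtain ⟨a, ha, b, hb, hab⟩ := Finset.one_lt_card.mp hkT.2
      obtain ⟨c, hc, d, hd, hcd⟩ := Finset.one_lt_card.mp hlT.2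
      rw [hF_def, Finset.mem_filter] at ha hb hc hd
      have hψab : ψ a = ψ b := ha.2.trans hb.2.symm
      have hψcd : ψ c = ψ d := hc.2.trans hd.2.symm
      have hac : a ≠ c := fun h => hkl (ha.2.symm.trans (h ▸ hc.2))
      have had : a ≠ d := fun h => hkl (ha.2.symm.trans (h ▸ hd.2))
      set σ : Equiv.Perm (Fin n) := Equiv.swap a b * Equiv.swap c d with hσ_def
      have hsign : Equiv.Perm.sign σ = 1 := by
        rw [hσ_def, map_mul, Equiv.Perm.sign_swap hab, Equiv.Perm.sign_swap hcd]
        decide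
      have hinv : ∀ i, ψ (σ i) = ψ i := by
        intro i
        rw [hσ_def, Equiv.Perm.mul_apply, swap_fiber ψ hψab, swap_fiber ψ hψcd]
      have h1 := main σ hsign hinv
      have hσa : σ a = b := by
        rw [hσ_def, Equiv.Perm.mul_apply, Equiv.swap_apply_of_ne_of_ne hac had,
          Equiv.swap_apply_left]
      rw [h1] at hσa
      exact hab (by simpa using hσa)
end

section
/- Let n, k be positive integers and let X = (Fin n) × (Fin k), a set of nk elements partitioned into k copies of an n-element set. Let S_n act on X by σ·(i, j) = (σ(i), j), i.e., S_n acts via the same permutation simultaneously on each of the k copies. Then the distinguishing number of this action equals ⌈n^{1/k}⌉, i.e., it equals the least positive integer t such that n ≤ t^k. -/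
/-- Let `S_n` act on `X = Fin n × Fin k` (that is, `k` disjoint copies of an `n`-element set)
by acting via the same permutation simultaneously on each copy. The distinguishing number of
this action is `⌈n^(1/k)⌉`, i.e. the least positive integer `t` with `n ≤ t ^ k`. -/
theorem distinguishing_number_diagonal_copies (n k : ℕ) (hn : 0 < n) (hk : 0 < k) :
    sInf {r : ℕ | ∃ φ : Fin n × Fin k → Fin r,
        ∀ σ : Equiv.Perm (Fin n), (∀ p : Fin n × Fin k, φ (σ p.1, p.2) = φ p) → σ = 1}
      = sInf {t : ℕ | 0 < t ∧ n ≤ t ^ k} := by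
  congr 1
  ext r
  simp only [Set.mem_setOf_eq]
  constructor
  · rintro ⟨φ, hφ⟩
    have hr : 0 < r := by
      rcases Nat.eq_zero_or_pos r with h | h
      · subst h
        exact (φ (⟨0, hn⟩, ⟨0, hk⟩)).elim0
      · exact h
    refine ⟨hr, ?_⟩
    -- the map i ↦ (j ↦ φ (i, j)) is injective
    have hinj : Function.Injective (fun i : Fin n => fun j : Fin k => φ (i, j)) := by
      intro a b hab
      by_contra hne
      have := hφ (Equiv.swap a b) ?_
      · exact hne (Equiv.swap_eq_one_iff.mp this)
      · intro p
        rcases eq_or_ne p.1 a with h1 | h1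
        · have := (congrFun hab p.2).symm
          simp only at this
          rw [show p = (p.1, p.2) from rfl, h1, Equiv.swap_apply_left]
          exact this
        rcases eq_or_ne p.1 b with h2 | h2
        · have := congrFun hab p.2
          simp only at this
          rw [show p = (p.1, p.2) from rfl, h2, Equiv.swap_apply_right]
          exact this
        · rw [Equiv.swap_apply_of_ne_of_ne h1 h2]
    calc n = Fintype.card (Fin n) := (Fintype.card_fin n).symm
      _ ≤ Fintype.card (Fin k → Fin r) := Fintype.card_le_of_injective _ hinj
      _ = r ^ k := by simp
  · rintro ⟨ht, hle⟩
    refine ⟨fun p => (finFunctionFinEquiv.symm (Fin.castLE hle p.1)) p.2, ?_⟩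
    intro σ hσ
    have key : ∀ i : Fin n, σ i = i := by
      intro i
      have : finFunctionFinEquiv.symm (Fin.castLE hle (σ i))
          = finFunctionFinEquiv.symm (Fin.castLE hle i) := by
        funext j
        exact hσ (i, j)
      have h2 : Fin.castLE hle (σ i) = Fin.castLE hle i :=
        finFunctionFinEquiv.symm.injective this
      exact Fin.castLE_injective hle h2
    exact Equiv.ext key
end

section
/- Let λ and μ be partitions of a positive integer n. If λ ≥_c μ in the consumption ordering (i.e., every subgroup of S_n that consumes λ also consumes μ), then λ ≥ μ in the dominance ordering: for every k, the sum of the k largest parts of λ is at least the sum of the k largest parts of μ. -/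
/-- A subgroup `H` of `S_n` consumes a partition `λ ⊢ n` if there is a set partition of
`{1,…,n}` whose multiset of block sizes is `λ` and such that the only element of `H`
mapping each block to itself is the identity. -/
def Consumes (n : ℕ) (H : Subgroup (Equiv.Perm (Fin n))) (lam : Nat.Partition n) : Prop :=
  ∃ P : Finset (Finset (Fin n)),
    (∀ i : Fin n, ∃! B : Finset (Fin n), B ∈ P ∧ i ∈ B) ∧
    P.val.map Finset.card = lam.parts ∧
    ∀ σ ∈ H, (∀ B ∈ P, ∀ i ∈ B, σ i ∈ B) → σ = 1

/-!
Write the parts of `λ` in decreasing order as the rows of a Young diagram, label `[n]` by its cells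
and let `H` be the column group, the Young subgroup of the partition into columns. The partition into
rows has weight `λ` and distinguishes `H`, since a cell is determined by its row and its column.
If a set partition of weight `μ` distinguishes `H`, none of its blocks meets a column twice: the
transposition of two such cells would fix every block. So the union of its `k` largest blocks meets
column `j` in at most `min k (colLen j)` cells, and summing over the columns bounds
`μ₁ + ⋯ + μₖ` by the number of cells in the first `k` rows, `λ₁ + ⋯ + λₖ`.
-/

open Finset

theorem Multiset.exists_le_map_eq_of_le_map {α β : Type*} {f : α → β} {u : Multiset β}
    {t : Multiset α} (h : u ≤ t.map f) : ∃ v ≤ t, v.map f = u := by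
  induction t using Quotient.inductionOn with | h L => ?_
  induction u using Quotient.inductionOn with | h M => ?_
  obtain ⟨M', hperm, hsub⟩ := Multiset.coe_le.mp h
  obtain ⟨L', hL', rfl⟩ := List.sublist_map_iff.mp hsub
  exact ⟨L', Multiset.coe_le.mpr hL'.subperm, Multiset.coe_eq_coe.mpr hperm⟩

theorem Finset.exists_fin_embedding_map_univ_eq {β : Type*} {s : Finset β} {n : ℕ} (h : #s = n) :
    ∃ e : Fin n ↪ β, univ.map e = s := by
  subst h
  exact ⟨s.equivFin.symm.toEmbedding.trans (Function.Embedding.subtype _), by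
    rw [← map_map, univ_map_equiv_to_embedding, univ_eq_attach, attach_map_val]⟩

namespace YoungDiagram

variable (μ : YoungDiagram)

theorem fst_lt_colLen_zero {c : ℕ × ℕ} (hc : c ∈ μ) : c.1 < μ.colLen 0 :=
  mem_iff_lt_colLen.mp (μ.up_left_mem le_rfl (Nat.zero_le c.2) hc)

theorem card_filter_fst_lt (k : ℕ) : #{c ∈ μ.cells | c.1 < k} = (μ.rowLens.take k).sum := by
  have hrow : ∀ i ∈ range (min k (μ.colLen 0)), #{c ∈ {c ∈ μ.cells | c.1 < k} | c.1 = i} =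
      μ.rowLen i := by
    intro i hi
    rw [rowLen_eq_card, row, filter_filter]
    refine congrArg card (filter_congr fun c _ => ?_)
    simp only [mem_range, lt_min_iff] at hi
    constructor
    · exact And.right
    · rintro rfl; exact ⟨hi.1, rfl⟩
  rw [card_eq_sum_card_fiberwise (f := Prod.fst) (t := range (min k (μ.colLen 0))),
    sum_congr rfl hrow, rowLens, ← List.map_take, List.take_range, ← sum_map_val]
  · rfl
  · intro c hc
    obtain ⟨hcμ, hck⟩ := mem_filter.mp (mem_coe.mp hc)
    exact mem_range.mpr (lt_min hck (μ.fst_lt_colLen_zero hcμ))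

theorem card_cells : #μ.cells = μ.rowLens.sum := by
  rw [← filter_true_of_mem fun c hc => μ.fst_lt_colLen_zero hc, card_filter_fst_lt,
    List.take_of_length_le length_rowLens.le]

theorem card_col_filter_fst_lt (j k : ℕ) : #{c ∈ μ.col j | c.1 < k} = min (μ.colLen j) k := by
  have : {c ∈ μ.col j | c.1 < k} = range (min (μ.colLen j) k) ×ˢ {j} := by
    ext ⟨x, y⟩
    simp only [col_eq_prod, mem_filter, mem_product, mem_range, mem_singleton, lt_min_iff]
    tauto
  rw [this, card_product, card_range, card_singleton, mul_one]

theorem card_le_card_filter_fst_lt {U : Finset (ℕ × ℕ)} {k : ℕ} (hU : U ⊆ μ.cells)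
    (hcol : ∀ j, #{c ∈ U | c.2 = j} ≤ k) : #U ≤ #{c ∈ μ.cells | c.1 < k} := by
  have hmaps : ∀ s ⊆ μ.cells, Set.MapsTo Prod.snd (s : Set (ℕ × ℕ)) (μ.cells.image Prod.snd) :=
    fun s hs c hc => mem_image_of_mem _ (hs hc)
  rw [card_eq_sum_card_fiberwise (hmaps U hU),
    card_eq_sum_card_fiberwise (hmaps _ (filter_subset _ _))]
  refine sum_le_sum fun j _ => ?_
  calc #{c ∈ U | c.2 = j} ≤ min (μ.colLen j) k :=
        le_min (μ.colLen_eq_card ▸ card_le_card (filter_subset_filter _ hU)) (hcol j)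
    _ = #{c ∈ {c ∈ μ.cells | c.1 < k} | c.2 = j} := by
        rw [← card_col_filter_fst_lt, col, filter_filter, filter_filter]
        simp only [and_comm]

end YoungDiagram

section YoungSubgroup

variable {α β : Type*}

def youngSubgroup (f : α → β) : Subgroup (Equiv.Perm α) where
  carrier := {σ | ∀ x, f (σ x) = f x}
  one_mem' _ := rfl
  mul_mem' hσ hτ x := (hσ _).trans (hτ x)
  inv_mem' {σ} hσ x := by simpa using (hσ (σ⁻¹ x)).symm

theorem injOn_of_distinguishes_youngSubgroup [DecidableEq α] {f : α → β}
    {P : Finset (Finset α)} (hP : ∀ x, ∃! B, B ∈ P ∧ x ∈ B)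
    (hdist : ∀ σ ∈ youngSubgroup f, (∀ B ∈ P, ∀ x ∈ B, σ x ∈ B) → σ = 1)
    {B : Finset α} (hB : B ∈ P) : Set.InjOn f B := by
  intro x hx y hy hxy
  by_contra hne
  have hswap : Equiv.swap x y ∈ youngSubgroup f := fun z => by
    rw [Equiv.swap_apply_def]
    split_ifs with hzx hzy
    · rw [hzx, hxy]
    · rw [hzy, hxy]
    · rfl
  have hstab : ∀ B' ∈ P, ∀ z ∈ B', Equiv.swap x y z ∈ B' := by
    intro B' hB' z hz
    rw [Equiv.swap_apply_def]
    split_ifs with hzx hzy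
    · subst hzx
      exact (hP z).unique ⟨hB, hx⟩ ⟨hB', hz⟩ ▸ hy
    · subst hzy
      exact (hP z).unique ⟨hB, hy⟩ ⟨hB', hz⟩ ▸ hx
    · exact hz
  have hfix := congrArg (· x) (hdist _ hswap hstab)
  simp only [Equiv.swap_apply_left, Equiv.Perm.one_apply] at hfix
  exact hne hfix.symm

theorem card_filter_biUnion_le [DecidableEq α] [DecidableEq β] {T : Finset (Finset α)} {f : α → β}
    (hT : ∀ B ∈ T, Set.InjOn f B) (b : β) : #{x ∈ T.biUnion id | f x = b} ≤ #T := by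
  rw [filter_biUnion]
  calc #(T.biUnion fun B => {x ∈ B | f x = b}) ≤ ∑ B ∈ T, #{x ∈ B | f x = b} := card_biUnion_le
    _ ≤ #T • 1 := sum_le_card_nsmul _ _ _ fun B hB => card_le_one.mpr fun x hx y hy =>
        hT B hB (mem_filter.mp hx).1 (mem_filter.mp hy).1
          ((mem_filter.mp hx).2.trans (mem_filter.mp hy).2.symm)
    _ = #T := mul_one _

end YoungSubgroup

section RowPartition

variable {α : Type*} [Fintype α] {μ : YoungDiagram} {pos : α ↪ ℕ × ℕ}

def rowFiber (pos : α ↪ ℕ × ℕ) (i : ℕ) : Finset α := {x | (pos x).1 = i}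

-- `μ.colLen 0` is the number of rows of `μ`.
def rowPartition [DecidableEq α] (μ : YoungDiagram) (pos : α ↪ ℕ × ℕ) : Finset (Finset α) :=
  (range (μ.colLen 0)).image (rowFiber pos)

theorem mem_rowFiber {i : ℕ} {x : α} : x ∈ rowFiber pos i ↔ (pos x).1 = i := by
  simp [rowFiber]

theorem card_rowFiber (hpos : univ.map pos = μ.cells) (i : ℕ) :
    #(rowFiber pos i) = μ.rowLen i := by
  rw [μ.rowLen_eq_card, YoungDiagram.row, ← hpos, filter_map, card_map]
  rfl

theorem rowFiber_mem_rowPartition [DecidableEq α] (hpos : univ.map pos = μ.cells) (x : α) :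
    rowFiber pos (pos x).1 ∈ rowPartition μ pos :=
  mem_image_of_mem _ <| mem_range.mpr <| μ.fst_lt_colLen_zero <| by
    rw [← YoungDiagram.mem_cells, ← hpos]
    exact mem_map_of_mem pos (mem_univ x)

theorem existsUnique_mem_rowPartition [DecidableEq α] (hpos : univ.map pos = μ.cells) (x : α) :
    ∃! B, B ∈ rowPartition μ pos ∧ x ∈ B := by
  refine ⟨rowFiber pos (pos x).1, ⟨rowFiber_mem_rowPartition hpos x, mem_rowFiber.mpr rfl⟩, ?_⟩
  rintro B ⟨hB, hxB⟩
  obtain ⟨i, -, rfl⟩ := mem_image.mp hB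
  rw [mem_rowFiber.mp hxB]

theorem map_card_rowPartition [DecidableEq α] (hpos : univ.map pos = μ.cells) :
    (rowPartition μ pos).val.map card = μ.rowLens := by
  have hinj : Set.InjOn (rowFiber pos) (range (μ.colLen 0)) := by
    intro i hi i' _ h
    obtain ⟨x, hx⟩ : (rowFiber pos i).Nonempty := by
      rw [← card_pos, card_rowFiber hpos, ← YoungDiagram.mem_iff_lt_rowLen,
        YoungDiagram.mem_iff_lt_colLen]
      exact mem_range.mp hi
    exact (mem_rowFiber.mp hx).symm.trans (mem_rowFiber.mp (h ▸ hx))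
  rw [rowPartition, image_val_of_injOn hinj, Multiset.map_map, Function.comp_def]
  simp only [card_rowFiber hpos]
  rfl

theorem rowPartition_distinguishes [DecidableEq α] (hpos : univ.map pos = μ.cells) :
    ∀ σ ∈ youngSubgroup fun x => (pos x).2,
      (∀ B ∈ rowPartition μ pos, ∀ x ∈ B, σ x ∈ B) → σ = 1 := by
  intro σ hσ hrows
  ext x
  have hrow : (pos (σ x)).1 = (pos x).1 :=
    mem_rowFiber.mp (hrows _ (rowFiber_mem_rowPartition hpos x) x (mem_rowFiber.mpr rfl))
  exact pos.injective (Prod.ext hrow (hσ x))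

theorem consumes_youngSubgroup_snd {n : ℕ} {μ : YoungDiagram} {pos : Fin n ↪ ℕ × ℕ}
    (hpos : univ.map pos = μ.cells) {lam : n.Partition} (hlam : lam.parts = μ.rowLens) :
    Consumes n (youngSubgroup fun x => (pos x).2) lam :=
  ⟨rowPartition μ pos, existsUnique_mem_rowPartition hpos,
    by rw [map_card_rowPartition hpos, hlam], rowPartition_distinguishes hpos⟩

end RowPartition

theorem sum_card_le_card_filter_fst_lt {α : Type*} [Fintype α] [DecidableEq α] {μ : YoungDiagram}
    {pos : α ↪ ℕ × ℕ} {Q : Finset (Finset α)} (hQ : ∀ x, ∃! B, B ∈ Q ∧ x ∈ B)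
    (hdist : ∀ σ ∈ youngSubgroup fun x => (pos x).2, (∀ B ∈ Q, ∀ x ∈ B, σ x ∈ B) → σ = 1)
    (hpos : univ.map pos ⊆ μ.cells) {T : Finset (Finset α)} (hTQ : T ⊆ Q) {k : ℕ}
    (hTk : #T ≤ k) : ∑ B ∈ T, #B ≤ #{c ∈ μ.cells | c.1 < k} := by
  have hdisj : (T : Set (Finset α)).PairwiseDisjoint id := fun B hB B' hB' hne =>
    disjoint_left.mpr fun x hxB hxB' => hne ((hQ x).unique ⟨hTQ hB, hxB⟩ ⟨hTQ hB', hxB'⟩)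
  have hcells : (T.biUnion id).map pos ⊆ μ.cells := (map_subset_map.mpr (subset_univ _)).trans hpos
  calc ∑ B ∈ T, #B = #((T.biUnion id).map pos) := by rw [card_map, card_biUnion hdisj]; rfl
    _ ≤ #{c ∈ μ.cells | c.1 < k} := μ.card_le_card_filter_fst_lt hcells fun j => by
        rw [filter_map, card_map]
        exact (card_filter_biUnion_le (fun B hB =>
          injOn_of_distinguishes_youngSubgroup hQ hdist (hTQ hB)) j).trans hTk

theorem sum_take_sort_le_of_consumes {n : ℕ} {μ : YoungDiagram} {pos : Fin n ↪ ℕ × ℕ}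
    (hpos : univ.map pos ⊆ μ.cells) {mu : n.Partition}
    (hmu : Consumes n (youngSubgroup fun x => (pos x).2) mu) (k : ℕ) :
    ((mu.parts.sort (· ≥ ·)).take k).sum ≤ #{c ∈ μ.cells | c.1 < k} := by
  obtain ⟨Q, hQ, hQmu, hdist⟩ := hmu
  have hle : ↑((mu.parts.sort (· ≥ ·)).take k) ≤ Q.val.map card := by
    rw [hQmu]
    exact (Multiset.coe_le.mpr (List.take_sublist _ _).subperm).trans_eq (Multiset.sort_eq _ _)
  obtain ⟨v, hvQ, hv⟩ := Multiset.exists_le_map_eq_of_le_map hle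
  let T : Finset (Finset (Fin n)) := ⟨v, Multiset.nodup_of_le hvQ Q.nodup⟩
  have hTk : #T ≤ k := by
    rw [card_def, ← Multiset.card_map card, hv, Multiset.coe_card, List.length_take]
    exact min_le_left _ _
  calc ((mu.parts.sort (· ≥ ·)).take k).sum = ∑ B ∈ T, #B := by
        rw [← sum_map_val, hv, Multiset.sum_coe]
    _ ≤ #{c ∈ μ.cells | c.1 < k} :=
        sum_card_le_card_filter_fst_lt hQ hdist hpos (val_le_iff.mp hvQ) hTk

theorem consumption_le_implies_dominance_general (n : ℕ) (lam mu : Nat.Partition n)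
    (h : ∀ H : Subgroup (Equiv.Perm (Fin n)), Consumes n H lam → Consumes n H mu) :
    ∀ k : ℕ, ((mu.parts.sort (· ≥ ·)).take k).sum ≤ ((lam.parts.sort (· ≥ ·)).take k).sum := by
  intro k
  set l := lam.parts.sort (· ≥ ·)
  let μ := YoungDiagram.ofRowLens l (List.sortedGE_iff_pairwise.mpr (Multiset.pairwise_sort _ _))
  have hrows : μ.rowLens = l := YoungDiagram.rowLens_ofRowLens_eq_self fun a ha =>
    lam.parts_pos ((Multiset.mem_sort _).mp ha)
  have hlam : lam.parts = μ.rowLens := by rw [hrows, Multiset.sort_eq]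
  obtain ⟨pos, hpos⟩ := exists_fin_embedding_map_univ_eq (s := μ.cells) (n := n) <| by
    rw [μ.card_cells, ← Multiset.sum_coe, ← hlam, lam.parts_sum]
  have hmu := h _ (consumes_youngSubgroup_snd hpos hlam)
  calc ((mu.parts.sort (· ≥ ·)).take k).sum ≤ #{c ∈ μ.cells | c.1 < k} :=
        sum_take_sort_le_of_consumes hpos.subset hmu k
    _ = (l.take k).sum := by rw [μ.card_filter_fst_lt, hrows]

/-- If `λ ≥_c μ` in the consumption ordering (every subgroup of `S_n` consuming `λ` also
consumes `μ`), then `λ ≥ μ` in the dominance ordering: for every `k`, the sum of the `k`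
largest parts of `λ` is at least the sum of the `k` largest parts of `μ`. -/
theorem consumption_le_implies_dominance (n : ℕ) (hn : 0 < n) (lam mu : Nat.Partition n)
    (h : ∀ H : Subgroup (Equiv.Perm (Fin n)), Consumes n H lam → Consumes n H mu) :
    ∀ k : ℕ, ((mu.parts.sort (· ≥ ·)).take k).sum ≤ ((lam.parts.sort (· ≥ ·)).take k).sum :=
  consumption_le_implies_dominance_general n lam mu h
end

section
/- Let λ and μ be partitions of a positive integer n. If λ ≥_c μ and μ ≥_c λ in the consumption ordering, then λ = μ. (Hence the consumption ordering is antisymmetric and defines a partial order on partitions of n.) -/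
/-!
Colour the points of `[n]` so that the `k`-th point of every block of the standard set partition of
shape `λ` gets colour `k` when `k < m`, and every other point gets a colour of its own. The group
`H` of colour-preserving permutations is distinguished by a set partition exactly when each block
is rainbow, so `H` consumes `λ`, and if it also consumes `μ`, counting the points of the first `m`
colours block by block gives `∑ min(λᵢ, m) ≤ ∑ min(μᵢ, m)`. These sums for all `m` determine a
partition, since their successive differences count the parts larger than `m`.
-/

open Finset Equiv

section Distinguishes

variable {α β : Type*}

def Distinguishes (P : Finset (Finset α)) (H : Subgroup (Perm α)) : Prop :=
  ∀ σ ∈ H, (∀ B ∈ P, ∀ i ∈ B, σ i ∈ B) → σ = 1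

def colorStabilizer (f : α → β) : Subgroup (Perm α) where
  carrier := {σ | ∀ x, f (σ x) = f x}
  one_mem' _ := rfl
  mul_mem' hσ hτ x := (hσ _).trans (hτ x)
  inv_mem' {σ} hσ x := by simpa using (hσ (σ⁻¹ x)).symm

variable [DecidableEq α]

theorem swap_mem_colorStabilizer {f : α → β} {x y : α} (h : f x = f y) :
    swap x y ∈ colorStabilizer f := by
  intro z
  rw [swap_apply_def]
  split_ifs <;> simp_all

theorem swap_mapsTo_blocks {P : Finset (Finset α)} (hP : ∀ i, ∃! B, B ∈ P ∧ i ∈ B)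
    {B : Finset α} (hB : B ∈ P) {x y : α} (hx : x ∈ B) (hy : y ∈ B) :
    ∀ B' ∈ P, ∀ i ∈ B', swap x y i ∈ B' := by
  intro B' hB' i hi
  rw [swap_apply_def]
  split_ifs with hix hiy
  · subst hix
    rwa [(hP i).unique ⟨hB', hi⟩ ⟨hB, hx⟩]
  · subst hiy
    rwa [(hP i).unique ⟨hB', hi⟩ ⟨hB, hy⟩]
  · exact hi

theorem distinguishes_colorStabilizer_iff {P : Finset (Finset α)}
    (hP : ∀ i, ∃! B, B ∈ P ∧ i ∈ B) (f : α → β) :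
    Distinguishes P (colorStabilizer f) ↔ ∀ B ∈ P, Set.InjOn f B := by
  constructor
  · intro hdist B hB x hx y hy hxy
    exact swap_eq_one_iff.mp <|
      hdist _ (swap_mem_colorStabilizer hxy) (swap_mapsTo_blocks hP hB hx hy)
  · intro hinj σ hσ hpres
    ext x
    obtain ⟨B, ⟨hB, hxB⟩, -⟩ := hP x
    exact hinj B hB (hpres B hB x hxB) hxB (hσ x)

theorem card_filter_mem_le_sum_min [Fintype α] [DecidableEq β] {P : Finset (Finset α)}
    (hP : ∀ i, ∃ B ∈ P, i ∈ B) {f : α → β} (hf : ∀ B ∈ P, Set.InjOn f B) (S : Finset β) :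
    #{x | f x ∈ S} ≤ ∑ B ∈ P, min #B #S :=
  calc #{x | f x ∈ S}
      ≤ #(P.biUnion fun B => {x ∈ B | f x ∈ S}) := by
        refine card_le_card fun x hx => ?_
        obtain ⟨B, hB, hxB⟩ := hP x
        exact mem_biUnion.mpr ⟨B, hB, mem_filter.mpr ⟨hxB, (mem_filter.mp hx).2⟩⟩
    _ ≤ ∑ B ∈ P, #{x ∈ B | f x ∈ S} := card_biUnion_le
    _ ≤ ∑ B ∈ P, min #B #S := sum_le_sum fun B hB =>
        le_min (card_filter_le _ _) <| card_le_card_of_injOn f (fun x hx => (mem_filter.mp hx).2)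
          ((hf B hB).mono (filter_subset _ _))

end Distinguishes

namespace Composition

variable {n : ℕ} (c : Composition n)

def blockFinset (i : Fin c.length) : Finset (Fin n) := {x | c.index x = i}

theorem mem_blockFinset {i : Fin c.length} {x : Fin n} : x ∈ c.blockFinset i ↔ c.index x = i := by
  simp [blockFinset]

theorem card_blockFinset (i : Fin c.length) : #(c.blockFinset i) = c.blocksFun i := by
  have : c.blockFinset i = univ.map (c.embedding i).toEmbedding := by
    ext x
    rw [mem_blockFinset, eq_comm, ← mem_range_embedding_iff']
    simp
  rw [this, card_map, card_univ, Fintype.card_fin]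

theorem blockFinset_injective : Function.Injective c.blockFinset := by
  intro i j hij
  obtain ⟨x, hx⟩ : (c.blockFinset i).Nonempty := by
    rw [← card_pos, card_blockFinset]
    exact c.one_le_blocksFun i
  exact (c.mem_blockFinset.mp hx).symm.trans (c.mem_blockFinset.mp (hij ▸ hx))

def setPartition : Finset (Finset (Fin n)) := univ.image c.blockFinset

theorem existsUnique_mem_setPartition (x : Fin n) :
    ∃! B, B ∈ c.setPartition ∧ x ∈ B := by
  refine ⟨c.blockFinset (c.index x), ⟨mem_image_of_mem _ (mem_univ _), c.mem_blockFinset.mpr rfl⟩,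
    ?_⟩
  rintro B ⟨hB, hxB⟩
  obtain ⟨i, -, rfl⟩ := mem_image.mp hB
  rw [c.mem_blockFinset.mp hxB]

theorem map_card_setPartition : c.setPartition.val.map card = c.blocks := by
  rw [setPartition, image_val_of_injOn c.blockFinset_injective.injOn, Multiset.map_map,
    Function.comp_def]
  simp only [card_blockFinset, Fin.univ_val_map, ofFn_blocksFun]

def offsetColoring (m : ℕ) (x : Fin n) : ℕ ⊕ Fin n :=
  if (c.invEmbedding x : ℕ) < m then .inl (c.invEmbedding x) else .inr x

theorem eq_of_index_eq_of_invEmbedding_eq {x y : Fin n} (hidx : c.index x = c.index y)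
    (hinv : (c.invEmbedding x : ℕ) = c.invEmbedding y) : x = y := by
  rw [← c.embedding_comp_inv x, ← c.embedding_comp_inv y]
  ext
  simp only [coe_embedding, hidx, hinv]

theorem injOn_offsetColoring (m : ℕ) : ∀ B ∈ c.setPartition, Set.InjOn (c.offsetColoring m) B := by
  intro B hB x hx y hy hxy
  obtain ⟨i, -, rfl⟩ := mem_image.mp hB
  have hidx : c.index x = c.index y :=
    (c.mem_blockFinset.mp hx).trans (c.mem_blockFinset.mp hy).symm
  unfold offsetColoring at hxy
  split_ifs at hxy
  · exact c.eq_of_index_eq_of_invEmbedding_eq hidx (Sum.inl_injective hxy)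
  · exact Sum.inr_injective hxy

theorem card_offsetColoring_mem (m : ℕ) :
    #{x | c.offsetColoring m x ∈ (range m).map .inl} = ∑ i, min (c.blocksFun i) m := by
  have hmem : ∀ x, c.offsetColoring m x ∈ (range m).map .inl ↔ (c.invEmbedding x : ℕ) < m := by
    intro x
    unfold offsetColoring
    split_ifs <;> simp_all
  simp only [hmem, card_filter, ← Fin.card_filter_val_lt]
  rw [← c.sum_sum_apply_embedding]
  simp

end Composition

theorem consumes_colorStabilizer_offsetColoring {n : ℕ} (c : Composition n) (m : ℕ) :
    Consumes n (colorStabilizer (c.offsetColoring m)) (.ofComposition n c) :=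
  ⟨c.setPartition, c.existsUnique_mem_setPartition, c.map_card_setPartition,
    (distinguishes_colorStabilizer_iff c.existsUnique_mem_setPartition _).mpr
      (c.injOn_offsetColoring m)⟩

namespace Multiset

theorem sum_map_min_succ (s : Multiset ℕ) (m : ℕ) :
    (s.map (min · (m + 1))).sum = (s.map (min · m)).sum + s.countP (m < ·) := by
  induction s using Multiset.induction with
  | empty => simp
  | cons a s ih =>
    simp only [map_cons, sum_cons, countP_cons, ih]
    split_ifs <;> omega

theorem countP_lt_eq_count_add (s : Multiset ℕ) (k : ℕ) :
    s.countP (k < ·) = s.count (k + 1) + s.countP (k + 1 < ·) := by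
  induction s using Multiset.induction with
  | empty => simp
  | cons a s ih =>
    simp only [countP_cons, count_cons, ih]
    split_ifs <;> omega

end Multiset

namespace Nat.Partition

variable {n : ℕ}

theorem sum_map_min_le_of_consumes {lam mu : Nat.Partition n}
    (h : ∀ H : Subgroup (Perm (Fin n)), Consumes n H lam → Consumes n H mu) (m : ℕ) :
    (lam.parts.map (min · m)).sum ≤ (mu.parts.map (min · m)).sum := by
  obtain ⟨c, rfl⟩ := ofComposition_surj lam
  obtain ⟨P, hP, hPmu, hdist⟩ := h _ (consumes_colorStabilizer_offsetColoring c m)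
  have hinj := (distinguishes_colorStabilizer_iff hP _).mp hdist
  calc ((ofComposition n c).parts.map (min · m)).sum
      = #{x | c.offsetColoring m x ∈ (range m).map .inl} := by
        rw [c.card_offsetColoring_mem, ofComposition_parts, ← c.ofFn_blocksFun, Multiset.map_coe,
          Multiset.sum_coe, List.map_ofFn, List.sum_ofFn]
        rfl
    _ ≤ ∑ B ∈ P, min #B #((range m).map .inl) :=
        card_filter_mem_le_sum_min (fun x => (hP x).exists) hinj _
    _ = (mu.parts.map (min · m)).sum := by
        rw [card_map, card_range, ← hPmu, Multiset.map_map]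
        rfl

theorem ext_of_sum_map_min {lam mu : Nat.Partition n}
    (h : ∀ m, (lam.parts.map (min · m)).sum = (mu.parts.map (min · m)).sum) : lam = mu := by
  have hcountP (k : ℕ) : lam.parts.countP (k < ·) = mu.parts.countP (k < ·) := by
    have := h (k + 1)
    rw [Multiset.sum_map_min_succ, Multiset.sum_map_min_succ, h k] at this
    omega
  refine Partition.ext (Multiset.ext.mpr fun k => ?_)
  cases k with
  | zero =>
    rw [Multiset.count_eq_zero.mpr fun h0 => (lam.parts_pos h0).false,
      Multiset.count_eq_zero.mpr fun h0 => (mu.parts_pos h0).false]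
  | succ k =>
    have := hcountP k
    rw [Multiset.countP_lt_eq_count_add lam.parts, Multiset.countP_lt_eq_count_add mu.parts,
      hcountP (k + 1)] at this
    omega

end Nat.Partition

theorem consumption_antisymm_general (n : ℕ) (lam mu : Nat.Partition n)
    (h₁ : ∀ H : Subgroup (Equiv.Perm (Fin n)), Consumes n H lam → Consumes n H mu)
    (h₂ : ∀ H : Subgroup (Equiv.Perm (Fin n)), Consumes n H mu → Consumes n H lam) :
    lam = mu :=
  Nat.Partition.ext_of_sum_map_min fun m =>
    (Nat.Partition.sum_map_min_le_of_consumes h₁ m).antisymm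
      (Nat.Partition.sum_map_min_le_of_consumes h₂ m)

/-- The consumption ordering is antisymmetric: if `λ ≥_c μ` and `μ ≥_c λ`, then `λ = μ`. -/
theorem consumption_antisymm (n : ℕ) (hn : 0 < n) (lam mu : Nat.Partition n)
    (h₁ : ∀ H : Subgroup (Equiv.Perm (Fin n)), Consumes n H lam → Consumes n H mu)
    (h₂ : ∀ H : Subgroup (Equiv.Perm (Fin n)), Consumes n H mu → Consumes n H lam) :
    lam = mu :=
  consumption_antisymm_general n lam mu h₁ h₂
end

section
/- Let n be a positive integer, let X = {1,…,n}, and let S_n act diagonally on the set X^{n−1} of (n−1)-tuples of elements of X, via σ·(x₁,…,x_{n−1}) = (σ(x₁),…,σ(x_{n−1})). Then for every subgroup H of S_n there exists a labeling φ : X^{n−1} → {1,2} with two labels such that the set of permutations of S_n preserving the labels, namely {σ ∈ S_n : φ(σ·x) = φ(x) for all x ∈ X^{n−1}}, is exactly H. -/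
/-- Every subgroup `H` of `S_n` can be obtained as the set of permutations preserving a
two-label labeling of the set `X^(n-1)` of `(n-1)`-tuples of elements of `X = {1,…,n}`,
where `S_n` acts on tuples coordinatewise. -/
theorem subgroup_from_labeling_of_tuples (n : ℕ) (hn : 0 < n)
    (H : Subgroup (Equiv.Perm (Fin n))) :
    ∃ φ : (Fin (n - 1) → Fin n) → Fin 2,
      {σ : Equiv.Perm (Fin n) | ∀ x : Fin (n - 1) → Fin n, φ (⇑σ ∘ x) = φ x}
        = (H : Set (Equiv.Perm (Fin n))) := by
  classical
  set x₀ : Fin (n-1) → Fin n := fun i => Fin.castLE (Nat.sub_le n 1) i with hx₀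
  refine ⟨fun x => if ∃ τ ∈ H, x = ⇑τ ∘ x₀ then 1 else 0, ?_⟩
  ext σ
  simp only [Set.mem_setOf_eq, SetLike.mem_coe]
  constructor
  · intro h
    have h0 := h x₀
    have h1 : (∃ τ ∈ H, x₀ = ⇑τ ∘ x₀) := ⟨1, H.one_mem, by ext i; simp⟩
    rw [if_pos h1] at h0
    have h2 : ∃ τ ∈ H, ⇑σ ∘ x₀ = ⇑τ ∘ x₀ := by
      by_contra hc
      rw [if_neg hc] at h0
      exact (by decide : (0 : Fin 2) ≠ 1) h0
    obtain ⟨τ, hτ, heq⟩ := h2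
    -- σ and τ agree on values < n-1
    have key : ∀ i : Fin n, (i : ℕ) < n - 1 → σ i = τ i := by
      intro i hi
      have := congrFun heq ⟨(i : ℕ), hi⟩
      simp only [Function.comp_apply, hx₀] at this
      have hx : (Fin.castLE (Nat.sub_le n 1) ⟨(i : ℕ), hi⟩) = i := by
        apply Fin.ext; rfl
      rwa [hx] at this
    have hστ : σ = τ := by
      refine Equiv.ext fun i => ?_
      by_cases hi : (i : ℕ) < n - 1
      · exact key i hi
      · -- i is the unique point with value n-1
        have huniq : ∀ j : Fin n, ¬ ((j : ℕ) < n - 1) → j = i := by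
          intro j hj
          apply Fin.ext
          have := j.isLt; have := i.isLt
          omega
        set k := τ.symm (σ i) with hk
        have hτk : τ k = σ i := τ.apply_symm_apply _
        by_cases hki : (k : ℕ) < n - 1
        · exfalso
          have hσk : σ k = σ i := by rw [key k hki, hτk]
          have hki2 : k = i := σ.injective hσk
          rw [hki2] at hki
          exact hi hki
        · have hki' : k = i := huniq k hki
          rw [← hki', hτk, hki']
      
    rwa [hστ]
  · intro hσ x
    have hiff : (∃ τ ∈ H, ⇑σ ∘ x = ⇑τ ∘ x₀) ↔ (∃ τ ∈ H, x = ⇑τ ∘ x₀) := by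
      constructor
      · rintro ⟨τ, hτ, he⟩
        refine ⟨σ⁻¹ * τ, mul_mem (inv_mem hσ) hτ, ?_⟩
        funext i
        have := congrFun he i
        simp only [Function.comp_apply, Equiv.Perm.coe_mul] at this ⊢
        rw [← this]
        simp
      · rintro ⟨τ, hτ, he⟩
        refine ⟨σ * τ, mul_mem hσ hτ, ?_⟩
        funext i
        have := congrFun he i
        simp only [Function.comp_apply, Equiv.Perm.coe_mul] at this ⊢
        rw [this]
    by_cases hc : ∃ τ ∈ H, x = ⇑τ ∘ x₀
    · rw [if_pos hc, if_pos (hiff.mpr hc)]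
    · rw [if_neg hc, if_neg (fun h => hc (hiff.mp h))]
end

section
/- Let G be a finite group acting faithfully on a finite set X with |X| = n. For each nonnegative integer m, let f(m) be the number of distinguishing labelings φ : X → {1,…,m}, i.e., labelings such that the only g ∈ G with φ(g·x) = φ(x) for all x ∈ X is the identity. Then there exists a polynomial p with rational coefficients of degree exactly n such that f(m) = p(m) for all nonnegative integers m. (Explicitly, p(x) = Σ_{i=1}^{n} a_i·C(x, i) where a_i is the number of distinguishing labelings of X using exactly i labels.) -/
open Finset Relation

section Aux

variable (G X : Type*) [Group G] [Fintype G] [Fintype X] [MulAction G X]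

/-- The setoid on `X` generated by identifying `x` with `g • x` for `g ∈ S`. -/
def distSetoid (S : Finset {g : G // g ≠ 1}) : Setoid X :=
  EqvGen.setoid (fun x y => ∃ g ∈ S, (g : G) • x = y)

/-- Number of classes of the relation generated by `S`. -/
noncomputable def distClasses (S : Finset {g : G // g ≠ 1}) : ℕ :=
  Nat.card (Quotient (distSetoid G X S))

variable {G X}

/-- Labelings invariant under all of `S` correspond to labelings of the quotient. -/
noncomputable def distEquiv (S : Finset {g : G // g ≠ 1}) (m : ℕ) :
    {φ : X → Fin m // ∀ g ∈ S, ∀ x : X, φ ((g : G) • x) = φ x} ≃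
      (Quotient (distSetoid G X S) → Fin m) where
  toFun φ := Quotient.lift φ.1 (by
    intro a b h
    induction h with
    | rel a b hab =>
        obtain ⟨g, hg, rfl⟩ := hab
        exact (φ.2 g hg a).symm
    | refl => rfl
    | symm _ _ _ ih => exact ih.symm
    | trans _ _ _ _ _ ih1 ih2 => exact ih1.trans ih2)
  invFun ψ := ⟨fun x => ψ (Quotient.mk _ x), by
    intro g hg x
    exact (congrArg ψ (Quotient.sound (EqvGen.rel _ _ ⟨g, hg, rfl⟩))).symm⟩
  left_inv φ := rfl
  right_inv ψ := by
    funext q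
    induction q using Quotient.ind
    rfl

lemma distClasses_empty : distClasses G X (∅ : Finset {g : G // g ≠ 1}) = Fintype.card X := by
  have e : Quotient (distSetoid G X (∅ : Finset {g : G // g ≠ 1})) ≃ X :=
    { toFun := Quotient.lift id (by
        intro a b h
        induction h with
        | rel a b hab => obtain ⟨g, hg, _⟩ := hab; simp at hg
        | refl => rfl
        | symm _ _ _ ih => exact ih.symm
        | trans _ _ _ _ _ ih1 ih2 => exact ih1.trans ih2)
      invFun := Quotient.mk _
      left_inv := by
        intro q
        induction q using Quotient.ind
        rfl
      right_inv := fun x => rfl }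
  rw [distClasses, Nat.card_congr e, Nat.card_eq_fintype_card]

lemma distClasses_lt [FaithfulSMul G X] (S : Finset {g : G // g ≠ 1}) (hS : S ≠ ∅) :
    distClasses G X S < Fintype.card X := by
  classical
  obtain ⟨g, hg⟩ := Finset.nonempty_iff_ne_empty.2 hS
  have hx : ∃ x : X, (g : G) • x ≠ x := by
    by_contra h
    push_neg at h
    exact g.2 (FaithfulSMul.eq_of_smul_eq_smul (fun x : X => by rw [h x, one_smul]))
  obtain ⟨x, hx⟩ := hx
  have : Fintype (Quotient (distSetoid G X S)) := Fintype.ofFinite _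
  rw [distClasses, Nat.card_eq_fintype_card]
  refine Fintype.card_lt_of_surjective_not_injective (Quotient.mk _)
    (fun q => Quotient.inductionOn q fun x => ⟨x, rfl⟩) ?_
  intro hinj
  exact hx (hinj (Quotient.sound (EqvGen.rel _ _ ⟨g, hg, rfl⟩))).symm

lemma count_invariant (S : Finset {g : G // g ≠ 1}) (m : ℕ) :
    Nat.card {φ : X → Fin m // ∀ g ∈ S, ∀ x : X, φ ((g : G) • x) = φ x} =
      m ^ distClasses G X S := by
  rw [Nat.card_congr (distEquiv S m), Nat.card_fun, Nat.card_eq_fintype_card, Fintype.card_fin,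
    distClasses]

open Classical in
lemma count_distinguishing [FaithfulSMul G X] (m : ℕ) :
    (Nat.card {φ : X → Fin m // ∀ g : G, (∀ x : X, φ (g • x) = φ x) → g = 1} : ℚ) =
      ∑ S : Finset {g : G // g ≠ 1}, (-1) ^ S.card * (m : ℚ) ^ distClasses G X S := by
  set G' := {g : G // g ≠ 1}
  set T : (X → Fin m) → Finset G' := fun φ =>
    univ.filter (fun g : G' => ∀ x : X, φ ((g : G) • x) = φ x) with hT
  have key : ∀ φ : X → Fin m,
      (∀ g : G, (∀ x : X, φ (g • x) = φ x) → g = 1) ↔ T φ = ∅ := by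
    intro φ
    simp only [hT, Finset.eq_empty_iff_forall_notMem, Finset.mem_filter, Finset.mem_univ,
      true_and]
    constructor
    · intro h g hg
      exact g.2 (h g hg)
    · intro h g hg
      by_contra hne
      exact h ⟨g, hne⟩ hg
  rw [Nat.card_eq_fintype_card, Fintype.card_subtype, ← Finset.sum_boole]
  push_cast
  calc (∑ φ : X → Fin m, if (∀ g : G, (∀ x : X, φ (g • x) = φ x) → g = 1) then (1 : ℚ) else 0)
      = ∑ φ : X → Fin m, ∑ S ∈ (T φ).powerset, (-1 : ℚ) ^ S.card := by
        refine Finset.sum_congr rfl fun φ _ => ?_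
        rw [if_congr (key φ) rfl rfl]
        have h := Finset.sum_powerset_neg_one_pow_card (x := T φ)
        have h2 : ((∑ S ∈ (T φ).powerset, (-1 : ℤ) ^ S.card : ℤ) : ℚ) =
            ∑ S ∈ (T φ).powerset, (-1 : ℚ) ^ S.card := by push_cast; rfl
        rw [← h2, h]
        split <;> simp
    _ = ∑ φ : X → Fin m, ∑ S : Finset G', if S ⊆ T φ then (-1 : ℚ) ^ S.card else 0 := by
        refine Finset.sum_congr rfl fun φ _ => ?_
        rw [← Finset.sum_filter]
        apply Finset.sum_congr _ (fun _ _ => rfl)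
        ext S
        simp [Finset.mem_powerset]
    _ = ∑ S : Finset G', ∑ φ : X → Fin m, if S ⊆ T φ then (-1 : ℚ) ^ S.card else 0 :=
        Finset.sum_comm
    _ = ∑ S : Finset G', (-1 : ℚ) ^ S.card * (m : ℚ) ^ distClasses G X S := by
        refine Finset.sum_congr rfl fun S _ => ?_
        rw [← Finset.sum_filter, Finset.sum_const, nsmul_eq_mul]
        have hcard : (univ.filter (fun φ : X → Fin m => S ⊆ T φ)).card =
            Nat.card {φ : X → Fin m // ∀ g ∈ S, ∀ x : X, φ ((g : G) • x) = φ x} := by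
          rw [Nat.card_eq_fintype_card, Fintype.card_subtype]
          congr 1
          ext φ
          simp only [hT, Finset.subset_iff, Finset.mem_filter, Finset.mem_univ, true_and]
          try tauto
        rw [hcard, count_invariant]
        push_cast
        try ring

end Aux

/-- For a finite group `G` acting faithfully on a finite set `X` with `|X| = n`, the counting
function `m ↦ #{distinguishing labelings φ : X → {1,…,m}}` agrees with a polynomial (with
rational coefficients) of degree exactly `n`. -/
theorem distinguishing_polynomial {G X : Type*} [Group G] [Fintype G] [Fintype X]
    [MulAction G X] [FaithfulSMul G X] :
    ∃ p : Polynomial ℚ, p.degree = (Fintype.card X : ℕ) ∧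
      ∀ m : ℕ, p.eval (m : ℚ) =
        Nat.card {φ : X → Fin m // ∀ g : G, (∀ x : X, φ (g • x) = φ x) → g = 1} := by
  classical
  set n := Fintype.card X with hn
  set f : Finset {g : G // g ≠ 1} → Polynomial ℚ := fun S =>
    Polynomial.C ((-1 : ℚ) ^ S.card) * Polynomial.X ^ distClasses G X S with hf
  refine ⟨∑ S : Finset {g : G // g ≠ 1}, f S, ?_, ?_⟩
  · have h0 : f (∅ : Finset {g : G // g ≠ 1}) = Polynomial.X ^ n := by
      simp [hf, distClasses_empty (G := G) (X := X), hn]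
    rw [← Finset.add_sum_erase _ f (Finset.mem_univ ∅), h0]
    rw [Polynomial.degree_add_eq_left_of_degree_lt, Polynomial.degree_X_pow]
    rw [Polynomial.degree_X_pow]
    refine lt_of_le_of_lt (Polynomial.degree_sum_le _ _) ?_
    rw [Finset.sup_lt_iff (by exact_mod_cast WithBot.bot_lt_coe (n : ℕ))]
    intro S hS
    have hS' : S ≠ ∅ := Finset.ne_of_mem_erase hS
    calc (f S).degree ≤ (distClasses G X S : ℕ) := by
          rw [hf]
          simpa [Polynomial.C_mul_X_pow_eq_monomial] using
            Polynomial.degree_monomial_le (distClasses G X S) ((-1 : ℚ) ^ S.card)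
      _ < ((n : ℕ) : WithBot ℕ) := by
          exact_mod_cast distClasses_lt (G := G) (X := X) S hS'
  · intro m
    rw [count_distinguishing]
    rw [Polynomial.eval_finset_sum]
    simp [hf]
end
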